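/- Let n be a positive integer, v ∈ ℝⁿ with v ≠ 0, σ > 0, ε > 0 and δ ≥ 0. Let Z be a standard one-dimensional Gaussian random variable (mean 0, variance 1). If Pr[|Z| > εσ/‖v‖ − ‖v‖/(2σ)] ≤ δ, then for every Borel set S ⊆ ℝⁿ, N(0, σ²I)(S) ≤ e^ε · N(−v, σ²I)(S) + δ. -/

import Mathlib

open MeasureTheory ProbabilityTheory
open scoped NNReal

/-- The Gaussian measure `N(m, v I)` on `ℝⁿ`. -/
noncomputable def gaussianPi {n : ℕ} (m : EuclideanSpace ℝ (Fin n)) (v : ℝ≥0) :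
    Measure (EuclideanSpace ℝ (Fin n)) :=
  (Measure.pi fun i => gaussianReal (m i) v).map (MeasurableEquiv.toLp 2 (Fin n → ℝ))

/-! The density of `N(0, σ²I)` with respect to `N(-v, σ²I)` is `exp L`, where
`L x = (‖x + v‖² - ‖x‖²) / (2σ²) = (2⟪x, v⟫ + ‖v‖²) / (2σ²)` is the privacy loss, so on
`{L ≤ ε}` the first measure is at most `e^ε` times the second. On the complement,
`|⟪v / ‖v‖, x⟫ / σ| > εσ/‖v‖ - ‖v‖/(2σ)`, and this standardized projection is a standard
Gaussian under `N(0, σ²I)`; hence `{L > ε}` has probability at most `δ`. -/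

open Real
open scoped ENNReal RealInnerProductSpace

lemma MeasurableEquiv.map_withDensity {α β : Type*} [MeasurableSpace α] [MeasurableSpace β]
    (e : α ≃ᵐ β) (μ : Measure α) (f : α → ℝ≥0∞) :
    (μ.withDensity f).map e = (μ.map e).withDensity (f ∘ e.symm) := by
  ext s hs
  rw [e.map_apply, withDensity_apply _ (e.measurable hs), withDensity_apply _ hs, e.restrict_map,
    lintegral_map_equiv]
  simp

lemma MeasureTheory.Measure.pi_withDensity {ι : Type*} [Fintype ι] {α : ι → Type*}
    [∀ i, MeasurableSpace (α i)] (μ : ∀ i, Measure (α i)) [∀ i, IsProbabilityMeasure (μ i)]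
    (f : ∀ i, α i → ℝ≥0∞) (hf : ∀ i, Measurable (f i))
    [∀ i, SigmaFinite ((μ i).withDensity (f i))] :
    Measure.pi (fun i => (μ i).withDensity (f i)) =
      (Measure.pi μ).withDensity (fun x => ∏ i, f i (x i)) := by
  refine Measure.pi_eq fun s hs => ?_
  have hbox : (Set.univ.pi s).indicator (fun x => ∏ i, f i (x i)) =
      fun x => ∏ i, (s i).indicator (f i) (x i) := by
    ext x
    by_cases hx : x ∈ Set.univ.pi s
    · rw [Set.indicator_of_mem hx]
      exact Finset.prod_congr rfl fun i _ => (Set.indicator_of_mem (hx i trivial) _).symm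
    · obtain ⟨i, hi⟩ : ∃ i, x i ∉ s i := by simpa [Set.mem_univ_pi] using hx
      rw [Set.indicator_of_notMem hx,
        Finset.prod_eq_zero (Finset.mem_univ i) (Set.indicator_of_notMem hi _)]
  rw [withDensity_apply _ (.univ_pi hs), ← lintegral_indicator (.univ_pi hs), hbox]
  refine (lintegral_prod_eq_prod_lintegral_of_indepFun Finset.univ
    (fun i (x : ∀ i, α i) => (s i).indicator (f i) (x i)) ?_ fun i => ?_).trans
    (Finset.prod_congr rfl fun i _ => ?_)
  · exact iIndepFun_pi fun i => ((hf i).indicator (hs i)).aemeasurable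
  · exact ((hf i).indicator (hs i)).comp (measurable_pi_apply i)
  · rw [withDensity_apply _ (hs i), ← lintegral_indicator (hs i)]
    exact (measurePreserving_eval μ i).lintegral_comp ((hf i).indicator (hs i))

lemma measure_le_exp_mul_add_of_eq_withDensity {α : Type*} [MeasurableSpace α] {μ ν : Measure α}
    {L : α → ℝ} (hL : Measurable L) (h : μ = ν.withDensity fun x => ENNReal.ofReal (exp (L x)))
    (ε : ℝ) {S : Set α} (hS : MeasurableSet S) :
    μ S ≤ ENNReal.ofReal (exp ε) * ν S + μ {x | ε < L x} := by
  have hG : MeasurableSet {x | L x ≤ ε} := measurableSet_le hL measurable_const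
  calc μ S ≤ μ (S ∩ {x | L x ≤ ε}) + μ (S \ {x | L x ≤ ε}) := measure_le_inter_add_sdiff _ _ _
    _ ≤ ENNReal.ofReal (exp ε) * ν S + μ {x | ε < L x} := by
      gcongr
      · rw [h, withDensity_apply _ (hS.inter hG)]
        calc ∫⁻ x in S ∩ {x | L x ≤ ε}, ENNReal.ofReal (exp (L x)) ∂ν
            ≤ ∫⁻ _ in S ∩ {x | L x ≤ ε}, ENNReal.ofReal (exp ε) ∂ν :=
              setLIntegral_mono measurable_const fun x hx =>
                ENNReal.ofReal_le_ofReal (exp_le_exp.2 hx.2)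
          _ ≤ ENNReal.ofReal (exp ε) * ν S := by
            rw [setLIntegral_const]
            gcongr
            exact Set.inter_subset_left
      · exact fun x hx => (not_le.1 hx.2 : ε < L x)

lemma gaussianReal_eq_withDensity_gaussianReal (μ μ' : ℝ) {v : ℝ≥0} (hv : v ≠ 0) :
    gaussianReal μ v = (gaussianReal μ' v).withDensity
      (fun x => ENNReal.ofReal (exp (((x - μ') ^ 2 - (x - μ) ^ 2) / (2 * v)))) := by
  rw [gaussianReal_of_var_ne_zero _ hv, gaussianReal_of_var_ne_zero _ hv,
    ← withDensity_mul _ (measurable_gaussianPDF _ _) (by fun_prop)]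
  congr 1
  ext x
  simp only [Pi.mul_apply, gaussianPDF, gaussianPDFReal_def]
  rw [← ENNReal.ofReal_mul (by positivity)]
  congr 1
  rw [mul_assoc _ (exp _), ← exp_add]
  congr 2
  ring

lemma gaussianPi_eq_withDensity_gaussianPi {n : ℕ} (m m' : EuclideanSpace ℝ (Fin n)) {w : ℝ≥0}
    (hw : w ≠ 0) :
    gaussianPi m w = (gaussianPi m' w).withDensity
      (fun x => ENNReal.ofReal (exp ((‖x - m'‖ ^ 2 - ‖x - m‖ ^ 2) / (2 * w)))) := by
  have hcoord : (fun i => gaussianReal (m i) w) = fun i => (gaussianReal (m' i) w).withDensity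
      (fun x => ENNReal.ofReal (exp (((x - m' i) ^ 2 - (x - m i) ^ 2) / (2 * w)))) :=
    funext fun i => gaussianReal_eq_withDensity_gaussianReal _ _ hw
  rw [gaussianPi, gaussianPi, hcoord, Measure.pi_withDensity _ _ fun i => by fun_prop,
    MeasurableEquiv.map_withDensity]
  congr 1
  ext x
  simp only [Function.comp_apply]
  rw [← ENNReal.ofReal_prod_of_nonneg fun i _ => (exp_pos _).le, ← exp_sum, ← Finset.sum_div,
    Finset.sum_sub_distrib, EuclideanSpace.real_norm_sq_eq, EuclideanSpace.real_norm_sq_eq]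
  rfl

lemma stdGaussian_map_inner {E : Type*} [NormedAddCommGroup E] [InnerProductSpace ℝ E]
    [FiniteDimensional ℝ E] [MeasurableSpace E] [BorelSpace E] {u : E} (hu : ‖u‖ = 1) :
    (stdGaussian E).map (fun x => ⟪u, x⟫) = gaussianReal 0 1 := by
  have h := IsGaussian.map_eq_gaussianReal (μ := stdGaussian E) (innerSL ℝ u)
  rw [integral_strongDual_stdGaussian, variance_dual_stdGaussian, innerSL_apply_norm, hu] at h
  simpa using h

lemma gaussianPi_zero_eq_map_stdGaussian {n : ℕ} (σ : ℝ) :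
    gaussianPi (0 : EuclideanSpace ℝ (Fin n)) (σ ^ 2).toNNReal =
      (stdGaussian (EuclideanSpace ℝ (Fin n))).map (σ • ·) := by
  have hcoord : (fun _ : Fin n => gaussianReal 0 (σ ^ 2).toNNReal) =
      fun _ => (gaussianReal 0 1).map (σ * ·) := by
    ext1 i
    rw [gaussianReal_map_const_mul, mul_zero, mul_one]
    congr
    ext
    simp [sq_nonneg]
  rw [gaussianPi, ← map_pi_eq_stdGaussian, Measure.map_map (by fun_prop) (by fun_prop)]
  simp only [PiLp.zero_apply]
  rw [hcoord, ← Measure.pi_map_pi fun _ => (measurable_const_mul σ).aemeasurable,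
    Measure.map_map (by fun_prop) (by fun_prop)]
  rfl

lemma gaussianPi_map_inner_div {n : ℕ} {u : EuclideanSpace ℝ (Fin n)} (hu : ‖u‖ = 1) {σ : ℝ}
    (hσ : σ ≠ 0) :
    (gaussianPi 0 (σ ^ 2).toNNReal).map (fun x => ⟪u, x⟫ / σ) = gaussianReal 0 1 := by
  rw [gaussianPi_zero_eq_map_stdGaussian, Measure.map_map (by fun_prop) (by fun_prop),
    ← stdGaussian_map_inner hu]
  congr 1
  ext x
  simp [inner_smul_right, hσ]

lemma sub_lt_abs_inner_div_of_lt {E : Type*} [NormedAddCommGroup E] [InnerProductSpace ℝ E]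
    {v x : E} (hv : v ≠ 0) {σ ε : ℝ} (hσ : 0 < σ)
    (h : ε < (‖x + v‖ ^ 2 - ‖x‖ ^ 2) / (2 * σ ^ 2)) :
    ε * σ / ‖v‖ - ‖v‖ / (2 * σ) < |⟪‖v‖⁻¹ • v, x⟫ / σ| := by
  have hv' : 0 < ‖v‖ := norm_pos_iff.2 hv
  rw [norm_add_sq_real, lt_div_iff₀ (by positivity)] at h
  have hlhs : ε * σ / ‖v‖ - ‖v‖ / (2 * σ) = (ε * (2 * σ ^ 2) - ‖v‖ ^ 2) / (2 * σ * ‖v‖) := by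
    field_simp
  have hrhs : ⟪‖v‖⁻¹ • v, x⟫ / σ = 2 * ⟪x, v⟫ / (2 * σ * ‖v‖) := by
    rw [real_inner_smul_left, real_inner_comm]
    field_simp
  rw [hlhs, hrhs]
  refine lt_of_lt_of_le ?_ (le_abs_self _)
  gcongr
  linarith

theorem gaussian_tail_bound_implies_dp_general
    {n : ℕ} (v : EuclideanSpace ℝ (Fin n)) (hv : v ≠ 0)
    (σ ε δ : ℝ) (hσ : 0 < σ)
    (htail : gaussianReal 0 1 {z : ℝ | |z| > ε * σ / ‖v‖ - ‖v‖ / (2 * σ)} ≤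
      ENNReal.ofReal δ) :
    ∀ S : Set (EuclideanSpace ℝ (Fin n)), MeasurableSet S →
      gaussianPi (0 : EuclideanSpace ℝ (Fin n)) (Real.toNNReal (σ ^ 2)) S ≤
        ENNReal.ofReal (Real.exp ε) * gaussianPi (-v) (Real.toNNReal (σ ^ 2)) S +
          ENNReal.ofReal δ := by
  intro S hS
  have hw : (σ ^ 2).toNNReal ≠ 0 := (Real.toNNReal_pos.2 (by positivity)).ne'
  have hloss := gaussianPi_eq_withDensity_gaussianPi 0 (-v) hw
  refine (measure_le_exp_mul_add_of_eq_withDensity (by fun_prop) hloss ε hS).trans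
    (add_le_add_right ?_ _)
  have hsub : {x | ε < (‖x - -v‖ ^ 2 - ‖x - 0‖ ^ 2) / (2 * ((σ ^ 2).toNNReal : ℝ))} ⊆
      (fun x => ⟪‖v‖⁻¹ • v, x⟫ / σ) ⁻¹' {z | |z| > ε * σ / ‖v‖ - ‖v‖ / (2 * σ)} := by
    intro x hx
    rw [Set.mem_ofPred_eq, sub_neg_eq_add, sub_zero, Real.coe_toNNReal _ (sq_nonneg σ)] at hx
    exact sub_lt_abs_inner_div_of_lt hv hσ hx
  calc _ ≤ _ := measure_mono hsub
    _ = gaussianReal 0 1 {z : ℝ | |z| > ε * σ / ‖v‖ - ‖v‖ / (2 * σ)} := by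
      rw [← Measure.map_apply (by fun_prop) (measurableSet_lt measurable_const measurable_abs),
        gaussianPi_map_inner_div (by simpa using norm_smul_inv_norm (𝕜 := ℝ) hv) hσ.ne']
    _ ≤ ENNReal.ofReal δ := htail

/-- **Reduction of the `(ε,δ)` inequality to a standard Gaussian tail bound** (from the
proof of Proposition 1).  For `v ≠ 0`, `σ > 0`, `ε > 0`, `δ ≥ 0` and `Z` a standard
Gaussian, if `Pr[|Z| > εσ/‖v‖ − ‖v‖/(2σ)] ≤ δ`, then for every Borel set `S`,
`N(0,σ²I)(S) ≤ e^ε · N(−v,σ²I)(S) + δ`. -/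
theorem gaussian_tail_bound_implies_dp
    {n : ℕ} (hn : 0 < n) (v : EuclideanSpace ℝ (Fin n)) (hv : v ≠ 0)
    (σ ε δ : ℝ) (hσ : 0 < σ) (hε : 0 < ε) (hδ : 0 ≤ δ)
    (htail : gaussianReal 0 1 {z : ℝ | |z| > ε * σ / ‖v‖ - ‖v‖ / (2 * σ)} ≤
      ENNReal.ofReal δ) :
    ∀ S : Set (EuclideanSpace ℝ (Fin n)), MeasurableSet S →
      gaussianPi (0 : EuclideanSpace ℝ (Fin n)) (Real.toNNReal (σ ^ 2)) S ≤
        ENNReal.ofReal (Real.exp ε) * gaussianPi (-v) (Real.toNNReal (σ ^ 2)) S +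
          ENNReal.ofReal δ :=
  gaussian_tail_bound_implies_dp_general v hv σ ε δ hσ htail
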